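/- arXiv:cs/0509062 — 2 statements merged into one kernel-verified Lean document; each statement's English description precedes it below -/
import Mathlib

section
/- For every R' ∈ [0,1) there exists a positive integer M such that for all positive integers j ≤ k with k even, k > M and R_o := 1 - j/k ≤ R', there exists δ' ∈ (0, H^{-1}((1-R_o)·ln 2)) such that: (i) w^{ub}(0) ≤ 0; (ii) w^{ub}(a) < 0 for all a ∈ (0, δ']; (iii) w^{ub}(a) ≤ H(a) - (1-R_o)·ln 2 for all a ∈ (δ', 1/2]. -/
/-!
Write `λ = j / k` and `t = (1 - 2b)^k`. Evaluating the infimum in `wo` at the Chernoff point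
`x = b / (1 - b)` gives `wo b ≤ H b + λ (log (1 + t) - log 2)`, and at `x = √(b / k)` a bound with
leading term `(j b / 2) log (k b)` when `k b ≤ 1`. The term under the supremum in `wub` is
symmetric under `b ↦ 1 - b`, so only `b ≤ 1/2` matters, where three estimates cover everything:
* `k b ≥ 1`: then `t ≤ (1 - 2b)^2 / 4`, and the Pinsker-type bound
  `H b ≤ log 2 - (1 - 2b)^2 / 2` leaves at most `-λ log 2`;
* `k b ≤ 1`: Gibbs' inequality bounds the term by `(1 + log k) / k - H a - a λ log 2`, which is
  below `-λ log 2` as soon as `H a` is close to `λ log 2`, and below `-H a` once `a` is not tiny;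
* `k b ≤ 1` and `a ≤ exp (-32 / λ)`: the negative term `(j b / 4) log (k b)` outweighs the
  entropy of `a`.
Taking `δ' = H⁻¹ (λ log 2 - θ)` for a margin `θ > 0` depending only on `R'`, and `k` so large that
`(1 + log k) / k < θ`, these give (i)–(iii).
-/

/-- Binary entropy function with natural logarithms (`Real.log 0 = 0` gives `H 0 = H 1 = 0`). -/
noncomputable def H (a : ℝ) : ℝ := -a * Real.log a - (1 - a) * Real.log (1 - a)

/-- The inverse of the binary entropy function: the unique `a ∈ [0, 1/2]` with `H a = y`. -/
noncomputable def Hinv (y : ℝ) : ℝ :=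
  sInf {a : ℝ | a ∈ Set.Icc (0 : ℝ) (1 / 2) ∧ H a = y}

/-- Asymptotic growth rate of the average weight distribution of Gallager's
`(n, j, k)` LDPC ensemble. -/
noncomputable def wo (j k : ℕ) (a : ℝ) : ℝ :=
  ((j : ℝ) / k) *
    sInf {y : ℝ | ∃ x : ℝ, 0 < x ∧
      y = Real.log (((1 + x) ^ k + (1 - x) ^ k) / (2 * x ^ (a * (k : ℝ))))} -
  ((j : ℝ) - 1) * H a

/-- Upper bound on the asymptotic growth rate of the average weight distribution of the
LDPC-GM ensemble (outer Gallager `(n, j, k)` LDPC code, inner rate-1 `(k, k)` regular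
LDGM code). -/
noncomputable def wub (j k : ℕ) (a : ℝ) : ℝ :=
  H a + sSup {y : ℝ | ∃ b : ℝ, b ∈ Set.Icc (a / k) (1 - a / k) ∧
    y = wo j k b + a * Real.log (1 - (1 - 2 * b) ^ k)
        + (1 - a) * Real.log (1 + (1 - 2 * b) ^ k) - Real.log 2}


open Real Set Filter Topology

lemma two_mul_le_log_one_add_sub_log_one_sub {s : ℝ} (h0 : 0 ≤ s) (h1 : s < 1) :
    2 * s ≤ log (1 + s) - log (1 - s) := by
  have hs := hasSum_log_sub_log_of_abs_lt_one (abs_lt.2 ⟨by linarith, h1⟩)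
  simpa using le_hasSum hs 0 fun i _ ↦ by positivity

lemma sq_le_mul_log_add_mul_log {s : ℝ} (h0 : 0 ≤ s) (h1 : s < 1) :
    s ^ 2 ≤ (1 + s) * log (1 + s) + (1 - s) * log (1 - s) := by
  let f x := (1 + x) * log (1 + x) + (1 - x) * log (1 - x) - x ^ 2
  have hf : ∀ x ∈ Ico (0 : ℝ) 1,
      HasDerivAt f (log (1 + x) - log (1 - x) - 2 * x) x := by
    rintro x ⟨hx0, hx1⟩
    have hp := (hasDerivAt_mul_log (x := 1 + x) (by linarith)).comp x
      ((hasDerivAt_id x).const_add 1)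
    have hm := (hasDerivAt_mul_log (x := 1 - x) (by linarith)).comp x
      ((hasDerivAt_id x).const_sub 1)
    exact ((hp.add hm).sub (hasDerivAt_pow 2 x)).congr_deriv (by push_cast; ring)
  have hmono : MonotoneOn f (Ico 0 1) := by
    refine monotoneOn_of_hasDerivWithinAt_nonneg (convex_Ico 0 1)
      (fun x hx ↦ (hf x hx).continuousAt.continuousWithinAt)
      (fun x hx ↦ (hf x (interior_subset hx)).hasDerivWithinAt) fun x hx ↦ ?_
    rw [interior_Ico] at hx
    linarith [two_mul_le_log_one_add_sub_log_one_sub hx.1.le hx.2]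
  have := hmono ⟨le_rfl, one_pos⟩ ⟨h0, h1⟩ h0
  simp only [f] at this
  norm_num at this
  linarith

lemma mul_log_two_le_log_one_add {l : ℝ} (h0 : 0 ≤ l) (h1 : l ≤ 1) :
    l * log 2 ≤ log (1 + l) := by
  have h := rpow_one_add_le_one_add_mul_self (s := 1) (by norm_num) h0 h1
  rw [show (1 : ℝ) + 1 = 2 by norm_num, mul_one] at h
  rw [← log_rpow two_pos]
  exact log_le_log (by positivity) h

lemma exp_neg_two_mul_le {u : ℝ} (h0 : 0 ≤ u) (h1 : u ≤ 1) : exp (-(2 * u)) ≤ 1 - u / 2 := by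
  have hconv := convexOn_exp.2 (mem_univ 0) (mem_univ (-2)) (sub_nonneg.2 h1) h0 (by ring)
  simp only [smul_eq_mul, mul_zero, zero_add, exp_zero, mul_one] at hconv
  have h2 : exp (-2) ≤ 1 / 2 := by
    rw [exp_neg, inv_le_comm₀ (exp_pos _) (by norm_num)]
    linarith [add_one_le_exp (2 : ℝ)]
  rw [show u * -2 = -(2 * u) by ring] at hconv
  nlinarith

lemma pow_le_sq_div_four {k : ℕ} (hk : 12 ≤ k) {s : ℝ} (hs0 : 0 ≤ s)
    (hs : s ≤ 1 - 2 / k) : s ^ k ≤ s ^ 2 / 4 := by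
  have hkR : (12 : ℝ) ≤ k := by exact_mod_cast hk
  have hcast : ((k - 2 : ℕ) : ℝ) = k - 2 := by push_cast [Nat.cast_sub (by omega : 2 ≤ k)]; ring
  have hexp : (1 - 2 / (k : ℝ)) ^ (k - 2) ≤ exp (-(5 / 3)) := calc
    (1 - 2 / (k : ℝ)) ^ (k - 2) ≤ exp (-(2 / k)) ^ (k - 2) :=
      pow_le_pow_left₀ (by linarith) (by linarith [add_one_le_exp (-(2 / (k : ℝ)))]) _
    _ = exp (-(2 * ((k : ℝ) - 2) / k)) := by rw [← exp_nat_mul, hcast]; ring_nf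
    _ ≤ exp (-(5 / 3)) := by
      rw [exp_le_exp, neg_le_neg_iff, le_div_iff₀ (by linarith)]
      linarith
  have hquarter : exp (-(5 / 3) : ℝ) ≤ 1 / 4 := by
    rw [exp_neg, inv_le_comm₀ (exp_pos _) (by norm_num)]
    linarith [quadratic_le_exp_of_nonneg (by norm_num : (0 : ℝ) ≤ 5 / 3)]
  calc s ^ k = s ^ 2 * s ^ (k - 2) := by rw [← pow_add]; congr 1; omega
    _ ≤ s ^ 2 * (1 / 4) := by
      gcongr
      exact (pow_le_pow_left₀ hs0 hs _).trans (hexp.trans hquarter)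
    _ = s ^ 2 / 4 := by ring

lemma H_eq_binEntropy : H = binEntropy := by
  ext a
  simp only [H, binEntropy, log_inv]
  ring

lemma H_strictMonoOn : StrictMonoOn H (Icc 0 (1 / 2)) := by
  rw [H_eq_binEntropy, one_div]
  exact binEntropy_strictMonoOn

lemma H_one_sub (a : ℝ) : H (1 - a) = H a := by
  rw [H_eq_binEntropy, binEntropy_one_sub]

lemma H_le_mul_one_sub_log {a : ℝ} (ha : a < 1) : H a ≤ a * (1 - log a) := by
  have := negMulLog_le_one_sub_self (x := 1 - a) (by linarith)
  simp only [negMulLog] at this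
  simp only [H]
  linarith

lemma neg_mul_log_add_half_le_H {b : ℝ} (h0 : 0 ≤ b) (h1 : b ≤ 1 / 2) :
    -b * log b + b / 2 ≤ H b := by
  have hl : log (1 - b) ≤ -b := by linarith [log_le_sub_one_of_pos (x := 1 - b) (by linarith)]
  simp only [H]
  nlinarith

lemma H_le_log_two_sub_sq {b : ℝ} (h0 : 0 < b) (h1 : b ≤ 1 / 2) :
    H b ≤ log 2 - (1 - 2 * b) ^ 2 / 2 := by
  have hs := sq_le_mul_log_add_mul_log (s := 1 - 2 * b) (by linarith) (by linarith)
  have e₁ : log b = log (2 * b) - log 2 := by rw [log_mul two_ne_zero h0.ne']; ring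
  have e₂ : log (1 - b) = log (2 * (1 - b)) - log 2 := by
    rw [log_mul two_ne_zero (by linarith)]; ring
  rw [show 1 + (1 - 2 * b) = 2 * (1 - b) by ring, show 1 - (1 - 2 * b) = 2 * b by ring] at hs
  simp only [H, e₁, e₂]
  nlinarith

lemma H_le_neg_mul_log_sub_mul_log {p q : ℝ} (hp0 : 0 < p) (hp1 : p < 1) (hq0 : 0 < q)
    (hq1 : q < 1) : H p ≤ -(p * log q) - (1 - p) * log (1 - q) := by
  have h₁ := log_le_sub_one_of_pos (div_pos hq0 hp0)
  have h₂ := log_le_sub_one_of_pos (div_pos (sub_pos.2 hq1) (sub_pos.2 hp1))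
  rw [log_div hq0.ne' hp0.ne'] at h₁
  rw [log_div (by linarith) (by linarith)] at h₂
  have e₁ : p * (q / p - 1) = q - p := by field_simp
  have e₂ : (1 - p) * ((1 - q) / (1 - p) - 1) = p - q := by field_simp [sub_ne_zero.2 hp1.ne']; ring
  simp only [H]
  nlinarith [mul_le_mul_of_nonneg_left h₁ hp0.le, mul_le_mul_of_nonneg_left h₂ (sub_pos.2 hp1).le]

lemma H_add_mul_log_le_mul_H_div {a c : ℝ} (ha0 : 0 < a) (ha1 : a ≤ 1) (hc : 1 ≤ c) :
    H a + a * log c ≤ c * H (a / c) := by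
  have hc0 : 0 < c := by linarith
  have hconc := concaveOn_negMulLog.2 (mem_Ici.2 (by linarith : (0 : ℝ) ≤ 1 - a))
    (mem_Ici.2 zero_le_one) (inv_nonneg.2 hc0.le) (sub_nonneg.2 (inv_le_one_of_one_le₀ hc))
    (by ring)
  have hmix : c⁻¹ • (1 - a) + (1 - c⁻¹) • (1 : ℝ) = 1 - a / c := by
    simp only [smul_eq_mul]; field_simp; ring
  rw [hmix, negMulLog_one, smul_zero, add_zero, smul_eq_mul] at hconc
  have key : negMulLog (1 - a) ≤ c * negMulLog (1 - a / c) := by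
    calc negMulLog (1 - a) = c * (c⁻¹ * negMulLog (1 - a)) := by field_simp
      _ ≤ c * negMulLog (1 - a / c) := by gcongr
  have e : c * H (a / c) = -a * (log a - log c) + c * negMulLog (1 - a / c) := by
    simp only [H, negMulLog, log_div ha0.ne' hc0.ne']; field_simp; ring
  rw [e]
  simp only [H, negMulLog] at key ⊢
  linarith

/-- Split at `u = 128 a`. Above it, `log (u / a) ≤ u / (16 a) - 1 + log 16`; below it,
`log u ≤ log 128 + log a ≤ log 128 - 32 / l`, so `(l u / 4) log u` alone is below `-6.7 u`. -/
lemma mul_log_sub_le_neg_H {l a u : ℝ} (hl0 : 0 < l) (hl1 : l ≤ 1) (ha0 : 0 < a) (hau : a ≤ u)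
    (hu1 : u ≤ 1) (ha : a ≤ exp (-32 / l)) :
    (l * u / 4 + a) * log u - u / 10 ≤ -H a - a / 8 := by
  have hu0 : 0 < u := ha0.trans_le hau
  have hlogu : log u ≤ 0 := log_nonpos hu0.le hu1
  have hloga : log a ≤ -32 / l := by simpa using log_le_log ha0 ha
  have hH := H_le_mul_one_sub_log
    (ha.trans_lt (exp_lt_one_iff.2 (div_neg_of_neg_of_pos (by norm_num) hl0)))
  have hlog2 := log_two_lt_d9
  rcases le_or_gt (128 * a) u with hbig | hsmall
  · have hfench := log_le_sub_one_of_pos (x := u / (16 * a)) (by positivity)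
    rw [log_div hu0.ne' (by positivity), log_mul (by norm_num) ha0.ne',
      show (16 : ℝ) = 2 ^ 4 by norm_num, log_pow] at hfench
    have e : a * (u / (2 ^ 4 * a) - 1) = u / 16 - a := by field_simp; ring
    nlinarith [mul_le_mul_of_nonneg_left hfench ha0.le,
      mul_nonpos_of_nonneg_of_nonpos (by positivity : 0 ≤ l * u / 4) hlogu]
  · have hlog128 : log u ≤ 7 * log 2 + log a := by
      rw [show 7 * log 2 = log (2 ^ 7) by rw [log_pow]; norm_num, ← log_mul (by norm_num) ha0.ne']
      exact log_le_log hu0 (by norm_num; linarith)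
    have hlu : l * log u ≤ 7 * log 2 - 32 := by
      have := mul_le_mul_of_nonneg_left hloga hl0.le
      rw [mul_div_cancel₀ _ hl0.ne'] at this
      nlinarith [mul_le_mul_of_nonneg_left hlog128 hl0.le, log_pos one_lt_two]
    nlinarith [mul_le_mul_of_nonneg_left hlu (by positivity : 0 ≤ u / 4),
      mul_le_mul_of_nonneg_left hlog128 ha0.le]

lemma Hinv_spec {y : ℝ} (h0 : 0 ≤ y) (h1 : y ≤ log 2) :
    Hinv y ∈ Icc 0 (1 / 2) ∧ H (Hinv y) = y := by
  have hcont : ContinuousOn H (Icc 0 (1 / 2)) := by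
    rw [H_eq_binEntropy]; exact binEntropy_continuous.continuousOn
  obtain ⟨a, ha, hHa⟩ := intermediate_value_Icc (by norm_num) hcont
    (by rw [H_eq_binEntropy, one_div, binEntropy_zero, binEntropy_two_inv]; exact ⟨h0, h1⟩)
  have hset : {x | x ∈ Icc (0 : ℝ) (1 / 2) ∧ H x = y} = {a} :=
    Set.eq_singleton_iff_unique_mem.2
      ⟨⟨ha, hHa⟩, fun x ⟨hx, hHx⟩ ↦ H_strictMonoOn.injOn hx ha (hHx.trans hHa.symm)⟩
  rw [Hinv, hset, csInf_singleton]
  exact ⟨ha, hHa⟩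

lemma Hinv_pos {y : ℝ} (h0 : 0 < y) (h1 : y ≤ log 2) : 0 < Hinv y := by
  obtain ⟨⟨hy0, -⟩, hy⟩ := Hinv_spec h0.le h1
  refine hy0.lt_of_ne fun h ↦ ?_
  rw [← h, H_eq_binEntropy, binEntropy_zero] at hy
  exact h0.ne hy

lemma Hinv_lt_Hinv {y₁ y₂ : ℝ} (h0 : 0 ≤ y₁) (h : y₁ < y₂) (h2 : y₂ ≤ log 2) :
    Hinv y₁ < Hinv y₂ := by
  obtain ⟨hm₁, hH₁⟩ := Hinv_spec h0 (h.le.trans h2)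
  obtain ⟨hm₂, hH₂⟩ := Hinv_spec (h0.trans h.le) h2
  rwa [← H_strictMonoOn.lt_iff_lt hm₁ hm₂, hH₁, hH₂]

lemma tendsto_one_add_log_div_atTop :
    Tendsto (fun k : ℕ ↦ (1 + log k) / k) atTop (𝓝 0) := by
  have h := (tendsto_inv_atTop_zero.add
    (tendsto_pow_log_div_mul_add_atTop 1 0 1 one_ne_zero)).comp tendsto_natCast_atTop_atTop
  simp only [pow_one, one_mul, add_zero] at h
  refine h.congr fun k ↦ ?_
  simp only [Function.comp, add_div, one_div]

lemma exists_margin {g : ℝ} (hg0 : 0 < g) (hg2 : g ≤ 2) :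
    ∃ a₀ ∈ Ioc (0 : ℝ) (1 / 2), ∃ θ > 0, ∀ l, g ≤ l → ∀ ρ < θ,
      H a₀ + θ ≤ l * log 2 ∧ θ + ρ ≤ a₀ * (l * log 2) ∧ ρ < exp (-32 / l) * (l * log 2) := by
  have hlog2 : 0 < log 2 := log_pos one_lt_two
  have hy : g * log 2 / 2 ≤ log 2 := by nlinarith
  obtain ⟨⟨-, ha₀⟩, hHa₀⟩ := Hinv_spec (by positivity) hy
  have ha₀0 := Hinv_pos (by positivity) hy
  set a₀ := Hinv (g * log 2 / 2)
  set e := exp (-32 / g)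
  have hglog : 0 < g * log 2 := by positivity
  have hθa₀ := mul_le_mul_of_nonneg_left (min_le_left a₀ e) hglog.le
  have hθe := mul_le_mul_of_nonneg_left (min_le_right a₀ e) hglog.le
  refine ⟨a₀, ⟨ha₀0, ha₀⟩, g * log 2 * min a₀ e / 2, by positivity, fun l hgl ρ hρ ↦ ?_⟩
  have hgl2 := mul_le_mul_of_nonneg_right hgl hlog2.le
  have he : e ≤ exp (-32 / l) := by
    rw [exp_le_exp, neg_div, neg_div, neg_le_neg_iff]
    exact div_le_div_of_nonneg_left (by norm_num) hg0 hgl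
  refine ⟨?_, ?_, ?_⟩
  · nlinarith [mul_le_mul_of_nonneg_left ha₀ hglog.le]
  · nlinarith [mul_le_mul_of_nonneg_left hgl2 ha₀0.le]
  · nlinarith [mul_le_mul hgl2 he (exp_pos _).le (by linarith), exp_pos (-32 / g)]

noncomputable def woObjective (k : ℕ) (b x : ℝ) : ℝ :=
  log (((1 + x) ^ k + (1 - x) ^ k) / (2 * x ^ (b * (k : ℝ))))

section

variable {j k : ℕ}

lemma two_mul_max_pow_le (hk : Even k) (x : ℝ) :
    2 * max 1 x ^ k ≤ (1 + x) ^ k + (1 - x) ^ k := by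
  have hconv := hk.convexOn_pow (𝕜 := ℝ)
  have mid : ∀ y z : ℝ, (y + z) / 2 = max 1 x → 2 * max 1 x ^ k ≤ y ^ k + z ^ k := by
    intro y z hyz
    have := hconv.2 (mem_univ y) (mem_univ z) (by norm_num : (0 : ℝ) ≤ 1 / 2)
      (by norm_num : (0 : ℝ) ≤ 1 / 2) (by norm_num)
    simp only [smul_eq_mul] at this
    rw [show 1 / 2 * y + 1 / 2 * z = (y + z) / 2 by ring, hyz] at this
    linarith
  rcases le_total x 1 with hx | hx
  · exact mid _ _ (by rw [max_eq_left hx]; ring)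
  · rw [← hk.neg_pow (1 - x)]
    exact mid _ _ (by rw [max_eq_right hx]; ring)

lemma add_pow_add_sub_pow_pos (hk : Even k) (x : ℝ) : 0 < (1 + x) ^ k + (1 - x) ^ k := by
  linarith [two_mul_max_pow_le hk x, pow_pos (zero_lt_one.trans_le (le_max_left 1 x)) k]

lemma woObjective_nonneg (hk : Even k) {b x : ℝ} (hb0 : 0 ≤ b) (hb1 : b ≤ 1) (hx : 0 < x) :
    0 ≤ woObjective k b x := by
  have hpow : x ^ (b * (k : ℝ)) ≤ max 1 x ^ k := by
    rw [← rpow_natCast]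
    calc x ^ (b * (k : ℝ)) ≤ max 1 x ^ (b * (k : ℝ)) :=
          rpow_le_rpow hx.le (le_max_right _ _) (by positivity)
      _ ≤ max 1 x ^ (k : ℝ) :=
          rpow_le_rpow_of_exponent_le (le_max_left _ _) (by nlinarith [k.cast_nonneg (α := ℝ)])
  refine log_nonneg ((one_le_div (by positivity)).2 ?_)
  linarith [two_mul_max_pow_le hk x]

lemma wo_eq (b : ℝ) : wo j k b =
    (j / k : ℝ) * sInf {y | ∃ x : ℝ, 0 < x ∧ y = woObjective k b x} - (j - 1) * H b := rfl

lemma wo_le (hk : Even k) {b x : ℝ} (hb0 : 0 ≤ b) (hb1 : b ≤ 1) (hx : 0 < x) :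
    wo j k b ≤ (j / k : ℝ) * woObjective k b x - (j - 1) * H b := by
  have hbdd : BddBelow {y : ℝ | ∃ x : ℝ, 0 < x ∧ y = woObjective k b x} :=
    ⟨0, by rintro _ ⟨x, hx, rfl⟩; exact woObjective_nonneg hk hb0 hb1 hx⟩
  have := csInf_le hbdd ⟨x, hx, rfl⟩
  rw [wo_eq]
  gcongr

lemma woObjective_eq (hk : Even k) {b x : ℝ} (hx : 0 < x) :
    woObjective k b x = log ((1 + x) ^ k + (1 - x) ^ k) - log 2 - b * k * log x := by
  rw [woObjective, log_div (add_pow_add_sub_pow_pos hk x).ne' (by positivity),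
    log_mul two_ne_zero (by positivity), log_rpow hx]
  ring

lemma woObjective_inv (hk : Even k) (b : ℝ) {x : ℝ} (hx : 0 < x) :
    woObjective k b x⁻¹ = woObjective k (1 - b) x := by
  have hN : (1 + x⁻¹) ^ k + (1 - x⁻¹) ^ k = ((1 + x) ^ k + (1 - x) ^ k) / x ^ k := by
    rw [← hk.neg_pow (1 - x⁻¹), show 1 + x⁻¹ = (x + 1) / x by field_simp,
      show -(1 - x⁻¹) = (1 - x) / x by field_simp; ring, div_pow, div_pow, add_comm x]
    ring
  rw [woObjective_eq hk (inv_pos.2 hx), woObjective_eq hk hx, hN,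
    log_div (add_pow_add_sub_pow_pos hk x).ne' (by positivity), log_pow, log_inv]
  ring

lemma wo_one_sub (hk : Even k) (b : ℝ) : wo j k (1 - b) = wo j k b := by
  have hset : ∀ c : ℝ, {y : ℝ | ∃ x : ℝ, 0 < x ∧ y = woObjective k c x} ⊆
      {y : ℝ | ∃ x : ℝ, 0 < x ∧ y = woObjective k (1 - c) x} := by
    rintro c _ ⟨x, hx, rfl⟩
    exact ⟨x⁻¹, inv_pos.2 hx, by rw [woObjective_inv hk _ hx, sub_sub_cancel]⟩
  rw [wo_eq, wo_eq, H_one_sub, (hset b).antisymm (by simpa using hset (1 - b))]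

-- The infimum in `wo`, evaluated at the Chernoff point `x = b / (1 - b)`.
lemma wo_le_H_add (hk : Even k) (hk0 : 0 < k) {b : ℝ} (hb0 : 0 < b) (hb1 : b < 1) :
    wo j k b ≤ H b + (j / k : ℝ) * (log (1 + (1 - 2 * b) ^ k) - log 2) := by
  have h1b : 0 < 1 - b := by linarith
  have hx : 0 < b / (1 - b) := div_pos hb0 h1b
  have hN : (1 + b / (1 - b)) ^ k + (1 - b / (1 - b)) ^ k =
      (1 + (1 - 2 * b) ^ k) / (1 - b) ^ k := by
    rw [show 1 + b / (1 - b) = 1 / (1 - b) by field_simp; ring,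
      show 1 - b / (1 - b) = (1 - 2 * b) / (1 - b) by field_simp; ring, div_pow, div_pow, one_pow,
      ← add_div]
  have hobj : woObjective k b (b / (1 - b)) = k * H b + log (1 + (1 - 2 * b) ^ k) - log 2 := by
    rw [woObjective_eq hk hx, hN, log_div (by positivity [hk.pow_nonneg (1 - 2 * b)])
      (by positivity), log_pow, log_div hb0.ne' h1b.ne', H]
    ring
  have hk' : (k : ℝ) ≠ 0 := by positivity
  calc wo j k b ≤ (j / k : ℝ) * woObjective k b (b / (1 - b)) - (j - 1) * H b :=
        wo_le hk hb0.le hb1.le hx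
    _ = H b + (j / k : ℝ) * (log (1 + (1 - 2 * b) ^ k) - log 2) := by
        rw [hobj]; field_simp; ring

lemma add_pow_add_sub_pow_le {x : ℝ} (hx0 : 0 ≤ x) (hx1 : x ≤ 1) :
    (1 + x) ^ k + (1 - x) ^ k ≤ 2 * exp ((k * x) ^ 2 / 2) := by
  have hplus : (1 + x) ^ k ≤ exp (k * x) := by
    rw [exp_nat_mul]
    exact pow_le_pow_left₀ (by linarith) (by linarith [add_one_le_exp x]) k
  have hminus : (1 - x) ^ k ≤ exp (-(k * x)) := by
    rw [← mul_neg, exp_nat_mul]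
    exact pow_le_pow_left₀ (by linarith) (by linarith [add_one_le_exp (-x)]) k
  have hcosh := cosh_le_exp_half_sq (k * x)
  rw [cosh_eq] at hcosh
  linarith

-- The point `x = √(b / k)` balances the Gaussian bound on the numerator against `x ^ (b k)`.
lemma wo_le_of_mul_le_one (hk : Even k) (hk2 : 2 ≤ k) (hj : 1 ≤ j) {b : ℝ} (hb0 : 0 < b)
    (hkb : k * b ≤ 1) : wo j k b ≤ (j * b / 2) * log (k * b) + b / 2 - b * log b := by
  have hkR : (2 : ℝ) ≤ k := by exact_mod_cast hk2
  have hjR : (1 : ℝ) ≤ j := by exact_mod_cast hj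
  have hb2 : b ≤ 1 / 2 := by nlinarith
  set x := √(b / k)
  have hx0 : 0 < x := sqrt_pos.2 (by positivity)
  have hx1 : x ≤ 1 := sqrt_le_one.2 ((div_le_one (by positivity)).2 (by nlinarith))
  have hx2 : (k * x) ^ 2 = k * b := by
    rw [mul_pow, sq_sqrt (by positivity)]; field_simp
  have hlogx : log x = (log b - log k) / 2 := by
    rw [log_sqrt (by positivity), log_div hb0.ne' (by positivity)]
  have hobj : woObjective k b x ≤ k * b / 2 - b * k * ((log b - log k) / 2) := by
    have := log_le_log (add_pow_add_sub_pow_pos hk x) (add_pow_add_sub_pow_le hx0.le hx1)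
    rw [log_mul two_ne_zero (exp_pos _).ne', log_exp, hx2] at this
    rw [woObjective_eq hk hx0, hlogx]
    linarith
  have hwo := (wo_le (j := j) hk hb0.le (by linarith) hx0).trans
    (sub_le_sub_right (mul_le_mul_of_nonneg_left hobj (by positivity)) _)
  have e : (j / k : ℝ) * (k * b / 2 - b * k * ((log b - log k) / 2)) =
      j * b / 2 - j * b / 2 * (log b - log k) := by field_simp
  rw [e] at hwo
  rw [log_mul (by positivity) hb0.ne']
  have hH := neg_mul_log_add_half_le_H hb0.le hb2
  nlinarith [mul_le_mul_of_nonneg_left hH (by linarith : (0 : ℝ) ≤ j - 1)]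

lemma wo_zero_nonpos (hk : Even k) : wo j k 0 ≤ 0 := by
  have hlim : Tendsto (woObjective k 0) (𝓝[>] 0) (𝓝 0) := by
    have hcont : Continuous fun x : ℝ ↦ log (((1 + x) ^ k + (1 - x) ^ k) / 2) :=
      (by fun_prop : Continuous fun x : ℝ ↦ ((1 + x) ^ k + (1 - x) ^ k) / 2).log
        fun x ↦ (div_pos (add_pow_add_sub_pow_pos hk x) two_pos).ne'
    have h0 := (hcont.tendsto 0).mono_left (nhdsWithin_le_nhds (s := Ioi 0))
    norm_num at h0
    refine h0.congr fun x ↦ ?_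
    simp [woObjective]
  have hev : ∀ᶠ x in 𝓝[>] (0 : ℝ), wo j k 0 ≤ (j / k : ℝ) * woObjective k 0 x := by
    filter_upwards [self_mem_nhdsWithin] with x hx
    simpa [H] using wo_le (j := j) hk le_rfl zero_le_one hx
  simpa using ge_of_tendsto (hlim.const_mul (j / k : ℝ)) hev

noncomputable def wubTerm (j k : ℕ) (a b : ℝ) : ℝ :=
  wo j k b + a * log (1 - (1 - 2 * b) ^ k) + (1 - a) * log (1 + (1 - 2 * b) ^ k) - log 2

lemma wubTerm_one_sub (hk : Even k) (a b : ℝ) : wubTerm j k a (1 - b) = wubTerm j k a b := by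
  simp only [wubTerm, wo_one_sub hk, show 1 - 2 * (1 - b) = -(1 - 2 * b) by ring, hk.neg_pow]

lemma wub_le (hk : Even k) (hk0 : 0 < k) {a c : ℝ} (ha0 : 0 ≤ a) (ha1 : a ≤ 1 / 2)
    (h : ∀ b ∈ Icc (a / k) (1 / 2), wubTerm j k a b ≤ c) : wub j k a ≤ H a + c := by
  have hak : a / k ≤ 1 / 2 := (div_le_self ha0 (by exact_mod_cast hk0)).trans ha1
  have hsup : sSup {y | ∃ b ∈ Icc (a / k) (1 - a / k), y = wubTerm j k a b} ≤ c := by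
    refine csSup_le ⟨_, 1 / 2, ⟨hak, by linarith⟩, rfl⟩ ?_
    rintro _ ⟨b, ⟨hb1, hb2⟩, rfl⟩
    rcases le_total b (1 / 2) with hb | hb
    · exact h b ⟨hb1, hb⟩
    · rw [← wubTerm_one_sub hk]
      exact h _ ⟨by linarith, by linarith⟩
  exact add_le_add_right hsup _

lemma wubTerm_le_of_one_le_mul (hk : Even k) (hk12 : 12 ≤ k) (hjk : j ≤ k) {a b : ℝ}
    (ha : 0 ≤ a) (hkb : 1 ≤ k * b) (hb : b ≤ 1 / 2) :
    wubTerm j k a b ≤ -((j / k : ℝ) * log 2) := by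
  have hkR : (0 : ℝ) < k := by positivity
  have hb0 : 0 < b := pos_of_mul_pos_right (one_pos.trans_le hkb) hkR.le
  have hs0 : 0 ≤ 1 - 2 * b := by linarith
  have hs : 1 - 2 * b ≤ 1 - 2 / k := by
    have : 2 / (k : ℝ) ≤ 2 * b := by rw [div_le_iff₀ hkR]; linarith
    linarith
  set t := (1 - 2 * b) ^ k
  have ht0 : 0 ≤ t := pow_nonneg hs0 k
  have ht1 : t < 1 := pow_lt_one₀ hs0 (by linarith) (by omega)
  have ht := pow_le_sq_div_four hk12 hs0 hs
  have hl1 : (j / k : ℝ) ≤ 1 := (div_le_one hkR).2 (by exact_mod_cast hjk)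
  have hL0 : 0 ≤ log (1 + t) := log_nonneg (by linarith)
  have hLt : log (1 + t) ≤ t := by linarith [log_le_sub_one_of_pos (x := 1 + t) (by linarith)]
  have hLneg : a * log (1 - t) ≤ 0 :=
    mul_nonpos_of_nonneg_of_nonpos ha (log_nonpos (by linarith) (by linarith))
  have hcoef : ((j / k : ℝ) + (1 - a)) * log (1 + t) ≤ 2 * log (1 + t) :=
    mul_le_mul_of_nonneg_right (by linarith) hL0
  have hwo := wo_le_H_add (j := j) hk (by omega) hb0 (by linarith)
  have hH := H_le_log_two_sub_sq hb0 hb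
  simp only [wubTerm]
  nlinarith

lemma wubTerm_le_sub_H_sub (hk : Even k) (hk0 : 0 < k) (hjk : j ≤ k)
    {a b : ℝ} (ha0 : 0 < a) (ha1 : a < 1) (hb0 : 0 < b) (hkb : k * b ≤ 1) :
    wubTerm j k a b ≤ (1 + log k) / k - H a - a * ((j / k : ℝ) * log 2) := by
  have hkR : (2 : ℝ) ≤ k := by obtain ⟨r, rfl⟩ := hk; norm_cast; omega
  have hb : b ≤ 1 / 2 := by nlinarith
  set l := (j / k : ℝ)
  have hl0 : 0 ≤ l := by positivity
  have hl1 : l ≤ 1 := (div_le_one (by positivity)).2 (by exact_mod_cast hjk)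
  set t := (1 - 2 * b) ^ k
  have ht0 : 0 ≤ t := pow_nonneg (by linarith) k
  have ht1 : t < 1 := pow_lt_one₀ (by linarith) (by linarith) (by omega)
  have hgibbs := H_le_neg_mul_log_sub_mul_log (p := a / (1 + l)) (q := (1 - t) / 2)
    (by positivity) ((div_lt_one (by positivity)).2 (by linarith)) (by linarith) (by linarith)
  rw [show 1 - (1 - t) / 2 = (1 + t) / 2 by ring, log_div (by linarith) two_ne_zero,
    log_div (by linarith) two_ne_zero] at hgibbs
  have hgibbs' : (1 + l) * H (a / (1 + l)) ≤
      -(a * log (1 - t)) - (1 + l - a) * log (1 + t) + (1 + l) * log 2 := by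
    refine (mul_le_mul_of_nonneg_left hgibbs (by positivity)).trans_eq ?_
    field_simp
    ring
  have hmix := H_add_mul_log_le_mul_H_div ha0 ha1.le (by linarith : (1 : ℝ) ≤ 1 + l)
  have hlog := mul_le_mul_of_nonneg_left (mul_log_two_le_log_one_add hl0 hl1) ha0.le
  have hHb : H b ≤ (1 + log k) / k := by
    have hinv : (k : ℝ)⁻¹ ≤ 1 / 2 := by rw [one_div]; exact inv_anti₀ two_pos hkR
    calc H b ≤ H (k : ℝ)⁻¹ :=
          H_strictMonoOn.monotoneOn ⟨hb0.le, hb⟩ ⟨by positivity, hinv⟩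
            (by rw [← one_div, le_div_iff₀ (by positivity)]; linarith)
      _ ≤ (k : ℝ)⁻¹ * (1 - log (k : ℝ)⁻¹) := H_le_mul_one_sub_log (by linarith)
      _ = (1 + log k) / k := by rw [log_inv]; field_simp; ring
  have hwo := wo_le_H_add (j := j) hk hk0 hb0 (by linarith)
  simp only [wubTerm]
  linarith

lemma log_one_add_one_sub_two_mul_pow_le (hk2 : 2 ≤ k) {b : ℝ} (hb0 : 0 < b) (hkb : k * b ≤ 1) :
    log (1 + (1 - 2 * b) ^ k) ≤ log 2 - k * b / 4 := by
  have hkR : (2 : ℝ) ≤ k := by exact_mod_cast hk2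
  have hu0 : 0 < k * b := by positivity
  have ht0 : 0 ≤ (1 - 2 * b) ^ k := pow_nonneg (by nlinarith) k
  have ht : (1 - 2 * b) ^ k ≤ exp (-(2 * (k * b))) := by
    have := one_sub_div_pow_le_exp_neg (n := k) (t := 2 * (k * b)) (by linarith)
    rwa [show 2 * (k * b) / k = 2 * b by field_simp] at this
  have h := log_le_log (by linarith) (by linarith [exp_neg_two_mul_le hu0.le hkb] :
    1 + (1 - 2 * b) ^ k ≤ 2 * (1 - k * b / 4))
  rw [log_mul two_ne_zero (by linarith)] at h
  linarith [log_le_sub_one_of_pos (x := 1 - k * b / 4) (by linarith)]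

lemma log_one_sub_one_sub_two_mul_pow_le (hk2 : 2 ≤ k) {b : ℝ} (hb0 : 0 < b) (hkb : k * b ≤ 1) :
    log (1 - (1 - 2 * b) ^ k) ≤ log 2 + log (k * b) := by
  have hkR : (2 : ℝ) ≤ k := by exact_mod_cast hk2
  have ht1 : (1 - 2 * b) ^ k < 1 := pow_lt_one₀ (by nlinarith) (by linarith) (by omega)
  have hbern := one_add_mul_le_pow (a := -(2 * b)) (by nlinarith) k
  rw [← sub_eq_add_neg] at hbern
  rw [← log_mul two_ne_zero (by positivity)]
  exact log_le_log (by linarith) (by linarith)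

lemma wubTerm_le_mul_log (hk : Even k) (hk0 : 0 < k) (hj : 4 ≤ j)
    (hρ : (1 + log k) / k ≤ 1 / 40) {a b : ℝ} (ha0 : 0 ≤ a) (ha1 : a ≤ 1 / 2) (hb0 : 0 < b)
    (hkb : k * b ≤ 1) :
    wubTerm j k a b ≤ ((j / k : ℝ) * (k * b) / 4 + a) * log (k * b) - k * b / 10 := by
  have hk2 : 2 ≤ k := by obtain ⟨r, rfl⟩ := hk; omega
  have hkR : (2 : ℝ) ≤ k := by exact_mod_cast hk2
  have hjR : (4 : ℝ) ≤ j := by exact_mod_cast hj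
  have hlogu : log (k * b) ≤ 0 := log_nonpos (by positivity) hkb
  have hlog1p := log_one_add_one_sub_two_mul_pow_le hk2 hb0 hkb
  have hlog1m := log_one_sub_one_sub_two_mul_pow_le hk2 hb0 hkb
  have hwo := wo_le_of_mul_le_one (j := j) hk hk2 (by omega) hb0 hkb
  have hlogb : log b = log (k * b) - log k := by
    rw [log_mul (by positivity) hb0.ne']; ring
  have hρu : b * (1 + log k) ≤ k * b / 40 := by
    calc b * (1 + log k) = k * b * ((1 + log k) / k) := by field_simp
      _ ≤ k * b * (1 / 40) := by gcongr
      _ = k * b / 40 := by ring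
  rw [hlogb] at hwo
  rw [show (j / k : ℝ) * (k * b) = j * b by field_simp]
  simp only [wubTerm]
  linarith [mul_le_mul_of_nonneg_left hlog1m ha0,
    mul_le_mul_of_nonneg_left hlog1p (by linarith : 0 ≤ 1 - a),
    mul_nonpos_of_nonneg_of_nonpos (by nlinarith : 0 ≤ b * (j / 4 - 1)) hlogu,
    mul_le_mul_of_nonneg_right ha1 (by positivity : (0 : ℝ) ≤ k * b)]

lemma wub_zero_nonpos (hk : Even k) (hk12 : 12 ≤ k) (hj : 4 ≤ j) (hjk : j ≤ k)
    (hρ : (1 + log k) / k ≤ 1 / 40) : wub j k 0 ≤ 0 := by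
  have hk0 : 0 < k := by omega
  suffices ∀ b ∈ Icc ((0 : ℝ) / k) (1 / 2), wubTerm j k 0 b ≤ 0 by
    simpa [H] using wub_le hk hk0 le_rfl (by norm_num) this
  rintro b ⟨hb0, hb⟩
  rw [zero_div] at hb0
  rcases hb0.eq_or_lt with rfl | hb0
  · simpa [wubTerm, one_add_one_eq_two] using wo_zero_nonpos (j := j) hk
  rcases le_total (k * b) 1 with hkb | hkb
  · refine (wubTerm_le_mul_log hk hk0 hj hρ le_rfl (by norm_num) hb0 hkb).trans ?_
    have := mul_nonpos_of_nonneg_of_nonpos (by positivity : (0 : ℝ) ≤ (j / k : ℝ) * (k * b) / 4)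
      (log_nonpos (by positivity) hkb)
    linarith [mul_pos (Nat.cast_pos.2 hk0 : (0 : ℝ) < k) hb0]
  · exact (wubTerm_le_of_one_le_mul hk hk12 hjk le_rfl hkb hb).trans
      (neg_nonpos.2 (by positivity))

lemma wub_neg (hk : Even k) (hk12 : 12 ≤ k) (hj : 4 ≤ j) (hjk : j ≤ k)
    (hρ : (1 + log k) / k ≤ 1 / 40) {a θ : ℝ} (ha0 : 0 < a) (ha1 : a ≤ 1 / 2) (hθ : 0 < θ)
    (hHa : H a + θ ≤ (j / k : ℝ) * log 2)
    (hsmall : (1 + log k) / k < exp (-32 / (j / k : ℝ)) * ((j / k : ℝ) * log 2)) :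
    wub j k a < 0 := by
  have hk0 : 0 < k := by omega
  have hkR : (0 : ℝ) < k := by positivity
  have hl0 : (0 : ℝ) < j / k := by positivity
  have hl1 : (j / k : ℝ) ≤ 1 := (div_le_one hkR).2 (by exact_mod_cast hjk)
  set ε := exp (-32 / (j / k : ℝ)) * ((j / k : ℝ) * log 2) - (1 + log k) / k with hε
  set m := min (min θ (a / 8)) ε
  have hm : 0 < m := lt_min (lt_min hθ (by positivity)) (sub_pos.2 hsmall)
  have hmθ : m ≤ θ := (min_le_left _ _).trans (min_le_left _ _)
  have hma : m ≤ a / 8 := (min_le_left _ _).trans (min_le_right _ _)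
  have hmε : m ≤ ε := min_le_right _ _
  suffices ∀ b ∈ Icc (a / k) (1 / 2), wubTerm j k a b ≤ -H a - m by
    linarith [wub_le hk hk0 ha0.le ha1 this]
  rintro b ⟨hab, hb⟩
  have hau : a ≤ k * b := by rwa [div_le_iff₀' hkR] at hab
  have hb0 : 0 < b := (div_pos ha0 hkR).trans_le hab
  rcases le_total (k * b) 1 with hkb | hkb
  · rcases le_total a (exp (-32 / (j / k : ℝ))) with hsm | hsm
    · linarith [(wubTerm_le_mul_log hk hk0 hj hρ ha0.le ha1 hb0 hkb).trans
        (mul_log_sub_le_neg_H hl0 hl1 ha0 hau hkb hsm)]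
    · linarith [wubTerm_le_sub_H_sub hk hk0 hjk ha0 (by linarith) hb0 hkb,
        mul_le_mul_of_nonneg_right hsm (by positivity : (0 : ℝ) ≤ j / k * log 2), hε]
  · linarith [wubTerm_le_of_one_le_mul hk hk12 hjk ha0.le hkb hb]

lemma wub_le_H_sub (hk : Even k) (hk12 : 12 ≤ k) (hjk : j ≤ k) {a θ : ℝ}
    (ha0 : 0 < a) (ha1 : a ≤ 1 / 2) (hH : (j / k : ℝ) * log 2 ≤ H a + θ)
    (hmarg : θ + (1 + log k) / k ≤ a * ((j / k : ℝ) * log 2)) :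
    wub j k a ≤ H a - (j / k : ℝ) * log 2 := by
  have hk0 : 0 < k := by omega
  have hkR : (0 : ℝ) < k := by positivity
  refine (wub_le hk hk0 ha0.le ha1 fun b ⟨hab, hb⟩ ↦ ?_).trans_eq (sub_eq_add_neg _ _).symm
  have hb0 : 0 < b := (div_pos ha0 hkR).trans_le hab
  rcases le_total (k * b) 1 with hkb | hkb
  · linarith [wubTerm_le_sub_H_sub hk hk0 hjk ha0 (by linarith) hb0 hkb]
  · exact wubTerm_le_of_one_le_mul hk hk12 hjk ha0.le hkb hb

lemma exists_delta (hk : Even k) (hk12 : 12 ≤ k) (hj : 4 ≤ j) (hjk : j ≤ k)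
    (hρ : (1 + log k) / k ≤ 1 / 40) {a₀ θ : ℝ} (ha₀ : a₀ ∈ Ioc 0 (1 / 2)) (hθ : 0 < θ)
    (hHa₀ : H a₀ + θ ≤ (j / k : ℝ) * log 2)
    (hmarg : θ + (1 + log k) / k ≤ a₀ * ((j / k : ℝ) * log 2))
    (hsmall : (1 + log k) / k < exp (-32 / (j / k : ℝ)) * ((j / k : ℝ) * log 2)) :
    ∃ δ' ∈ Ioo 0 (Hinv ((j / k : ℝ) * log 2)), wub j k 0 ≤ 0 ∧
      (∀ a ∈ Ioc 0 δ', wub j k a < 0) ∧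
      ∀ a ∈ Ioc δ' (1 / 2), wub j k a ≤ H a - (j / k : ℝ) * log 2 := by
  have hl1 : (j / k : ℝ) ≤ 1 := (div_le_one (by positivity)).2 (by exact_mod_cast hjk)
  have hlog2 : 0 < log 2 := log_pos one_lt_two
  have hHa₀0 : 0 ≤ H a₀ := by
    rw [H_eq_binEntropy]; exact binEntropy_nonneg ha₀.1.le (by linarith [ha₀.2])
  have hy1 : (j / k : ℝ) * log 2 ≤ log 2 := by nlinarith
  obtain ⟨hδ, hHδ⟩ := Hinv_spec (y := (j / k : ℝ) * log 2 - θ) (by linarith) (by linarith)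
  have hmem₀ : a₀ ∈ Icc (0 : ℝ) (1 / 2) := Ioc_subset_Icc_self ha₀
  have ha₀δ : a₀ ≤ Hinv ((j / k : ℝ) * log 2 - θ) :=
    (H_strictMonoOn.le_iff_le hmem₀ hδ).1 (by linarith)
  refine ⟨_, ⟨ha₀.1.trans_le ha₀δ, Hinv_lt_Hinv (by linarith) (by linarith) hy1⟩,
    wub_zero_nonpos hk hk12 hj hjk hρ, fun a ⟨ha0, haδ⟩ ↦ ?_, fun a ⟨hδa, ha1⟩ ↦ ?_⟩
  · have ha1 : a ≤ 1 / 2 := haδ.trans hδ.2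
    have := (H_strictMonoOn.le_iff_le ⟨ha0.le, ha1⟩ hδ).2 haδ
    exact wub_neg hk hk12 hj hjk hρ ha0 ha1 hθ (by linarith) hsmall
  · have ha0 : 0 < a := ha₀.1.trans_le (ha₀δ.trans hδa.le)
    have := (H_strictMonoOn.le_iff_le hδ ⟨ha0.le, ha1⟩).2 hδa.le
    refine wub_le_H_sub hk hk12 hjk ha0 ha1 (by linarith) (hmarg.trans ?_)
    exact mul_le_mul_of_nonneg_right (ha₀δ.trans hδa.le) (by positivity)

end

theorem stmt5 (R' : ℝ) (hR' : R' ∈ Set.Ico (0 : ℝ) 1) :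
    ∃ M : ℕ, 0 < M ∧
      ∀ j k : ℕ, 0 < j → j ≤ k → Even k → M < k → 1 - (j : ℝ) / k ≤ R' →
        ∃ δ' : ℝ, δ' ∈ Set.Ioo (0 : ℝ) (Hinv ((1 - (1 - (j : ℝ) / k)) * Real.log 2)) ∧
          wub j k 0 ≤ 0 ∧
          (∀ a ∈ Set.Ioc (0 : ℝ) δ', wub j k a < 0) ∧
          (∀ a ∈ Set.Ioc δ' (1 / 2 : ℝ),
            wub j k a ≤ H a - (1 - (1 - (j : ℝ) / k)) * Real.log 2) := by
  obtain ⟨hR0, hR1⟩ := hR'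
  have hg0 : 0 < 1 - R' := by linarith
  obtain ⟨a₀, ha₀, θ, hθ, hmargin⟩ := exists_margin hg0 (by linarith)
  obtain ⟨N, hN⟩ := eventually_atTop.1 <| ((eventually_ge_atTop 12).and
    (tendsto_natCast_atTop_atTop.eventually_ge_atTop (4 / (1 - R')))).and
    (tendsto_one_add_log_div_atTop.eventually
      (gt_mem_nhds (lt_min hθ (by norm_num : (0 : ℝ) < 1 / 40))))
  refine ⟨N + 1, N.succ_pos, fun j k _ hjk hk hNk hR ↦ ?_⟩
  obtain ⟨⟨hk12, hgk⟩, hρ⟩ := hN k (by omega)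
  have hgl : 1 - R' ≤ j / k := by linarith
  have hj4 : 4 ≤ j := by
    have h4 := (div_le_iff₀ hg0).1 hgk
    have hgkj := (le_div_iff₀ (by positivity : (0 : ℝ) < k)).1 hgl
    exact_mod_cast (by nlinarith : (4 : ℝ) ≤ j)
  obtain ⟨hHa₀, hmarg, hsmall⟩ := hmargin _ hgl _ (hρ.trans_le (min_le_left _ _))
  rw [sub_sub_cancel]
  exact exists_delta hk hk12 hj4 hjk (hρ.le.trans (min_le_right _ _)) ha₀ hθ hHa₀ hmarg hsmall
end

section
/- Let k ≥ 2 be an integer and q ∈ (0,1]. Then ∫₀¹ λ_q(t)dt = 1/(q·k). -/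
/-!
Write `D_q = 1 - (1 - q) G` with `G(x) = 1 - kx + (k-1)(1 - (1-x)^{k/(k-1)})`. Then
`G' = -k (1 - (1-x)^{1/(k-1)})`, and since `D_q' = -(1 - q) G'` the quotient rule gives
`(G / D_q)' = G' (D_q + (1 - q) G) / D_q² = G' / D_q² = -k λ_q`,
and `-G / (k D_q)` is an antiderivative of `λ_q`. Since `G(0) = 1`, `G(1) = 0` and `D_q(0) = q`,
the integral is `1 / (qk)`. Bernoulli's inequality gives `G ≤ 1`, hence `D_q ≥ q > 0` on `[0, 1]`.
-/

/-- `D_q(x) = 1 - (1-q)(1 - kx + (k-1)(1 - (1-x)^{k/(k-1)}))`. -/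
noncomputable def Dq (k : ℕ) (q x : ℝ) : ℝ :=
  1 - (1 - q) * (1 - k * x + ((k : ℝ) - 1) * (1 - (1 - x) ^ ((k : ℝ) / ((k : ℝ) - 1))))

/-- The check-regular variable degree distribution
`λ_q(x) = (1 - (1-x)^{1/(k-1)}) / D_q(x)²`. -/
noncomputable def lamq (k : ℕ) (q x : ℝ) : ℝ :=
  (1 - (1 - x) ^ (1 / ((k : ℝ) - 1))) / (Dq k q x) ^ 2

noncomputable def dqCore (k : ℕ) (x : ℝ) : ℝ :=
  1 - k * x + ((k : ℝ) - 1) * (1 - (1 - x) ^ ((k : ℝ) / ((k : ℝ) - 1)))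

section

variable {k : ℕ}

lemma Dq_eq_one_sub_mul_dqCore (k : ℕ) (q x : ℝ) : Dq k q x = 1 - (1 - q) * dqCore k x := rfl

lemma sub_one_pos_of_two_le (hk : 2 ≤ k) : (0 : ℝ) < (k : ℝ) - 1 := by
  have : (2 : ℝ) ≤ k := by exact_mod_cast hk
  linarith

lemma one_le_div_sub_one (hk : 2 ≤ k) : (1 : ℝ) ≤ (k : ℝ) / ((k : ℝ) - 1) := by
  rw [le_div_iff₀ (sub_one_pos_of_two_le hk)]
  linarith

lemma dqCore_zero (k : ℕ) : dqCore k 0 = 1 := by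
  simp [dqCore]

lemma Dq_zero (k : ℕ) (q : ℝ) : Dq k q 0 = q := by
  simp [Dq_eq_one_sub_mul_dqCore, dqCore_zero]

lemma dqCore_one (hk : 2 ≤ k) : dqCore k 1 = 0 := by
  have hp : (k : ℝ) / ((k : ℝ) - 1) ≠ 0 := (zero_lt_one.trans_le (one_le_div_sub_one hk)).ne'
  simp [dqCore, Real.zero_rpow hp]

lemma hasDerivAt_dqCore (hk : 2 ≤ k) (x : ℝ) :
    HasDerivAt (dqCore k) (-k * (1 - (1 - x) ^ (1 / ((k : ℝ) - 1)))) x := by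
  have hkm := (sub_one_pos_of_two_le hk).ne'
  have hexp : (k : ℝ) / ((k : ℝ) - 1) - 1 = 1 / ((k : ℝ) - 1) := by
    field_simp
    ring
  have hpow := (Real.hasDerivAt_rpow_const (x := 1 - x) (Or.inr (one_le_div_sub_one hk))).comp x
    ((hasDerivAt_id x).const_sub 1)
  rw [hexp] at hpow
  refine ((((hasDerivAt_id x).const_mul (k : ℝ)).const_sub 1).add
    ((hpow.const_sub 1).const_mul ((k : ℝ) - 1))).congr_deriv ?_
  field_simp
  ring

lemma dqCore_le_one (hk : 2 ≤ k) {x : ℝ} (hx : x ≤ 1) : dqCore k x ≤ 1 := by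
  have hkm := sub_one_pos_of_two_le hk
  have bernoulli : 1 + (k : ℝ) / ((k : ℝ) - 1) * (-x) ≤ (1 + -x) ^ ((k : ℝ) / ((k : ℝ) - 1)) :=
    one_add_mul_self_le_rpow_one_add (by linarith) (one_le_div_sub_one hk)
  rw [← sub_eq_add_neg] at bernoulli
  have hscaled := mul_le_mul_of_nonneg_left bernoulli hkm.le
  have hk' : ((k : ℝ) - 1) * ((k : ℝ) / ((k : ℝ) - 1)) = k := by field_simp
  rw [dqCore]
  nlinarith

lemma Dq_pos (hk : 2 ≤ k) {q : ℝ} (hq : q ∈ Set.Ioc (0 : ℝ) 1) {x : ℝ} (hx : x ≤ 1) :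
    0 < Dq k q x := by
  have hG := mul_le_mul_of_nonneg_left (dqCore_le_one hk hx) (sub_nonneg.mpr hq.2)
  rw [Dq_eq_one_sub_mul_dqCore]
  linarith [hq.1]

lemma hasDerivAt_neg_dqCore_div_Dq (hk : 2 ≤ k) {q : ℝ} (hq : q ∈ Set.Ioc (0 : ℝ) 1) {x : ℝ}
    (hx : x ≤ 1) :
    HasDerivAt (fun t => -dqCore k t / (k * Dq k q t)) (lamq k q x) x := by
  have hD := (Dq_pos hk hq hx).ne'
  have hk0 : (k : ℝ) ≠ 0 := by positivity
  have hG := hasDerivAt_dqCore hk x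
  have hDq : HasDerivAt (Dq k q) (-((1 - q) * (-k * (1 - (1 - x) ^ (1 / ((k : ℝ) - 1)))))) x :=
    (hG.const_mul (1 - q)).const_sub 1
  refine (hG.neg.div (hDq.const_mul (k : ℝ)) (mul_ne_zero hk0 hD)).congr_deriv ?_
  rw [lamq]
  rw [Dq_eq_one_sub_mul_dqCore] at hD ⊢
  simp only [Pi.neg_apply]
  field_simp
  ring

lemma continuousOn_lamq (hk : 2 ≤ k) {q : ℝ} (hq : q ∈ Set.Ioc (0 : ℝ) 1) :
    ContinuousOn (lamq k q) (Set.Icc 0 1) := by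
  have hkm := sub_one_pos_of_two_le hk
  have hN : Continuous fun x : ℝ => 1 - (1 - x) ^ (1 / ((k : ℝ) - 1)) := by
    fun_prop (disch := positivity)
  have hD : Continuous (Dq k q) := by
    unfold Dq
    fun_prop (disch := positivity)
  exact hN.continuousOn.div (hD.continuousOn.pow 2) fun x hx =>
    pow_ne_zero 2 (Dq_pos hk hq hx.2).ne'

end

theorem stmt10 (k : ℕ) (hk : 2 ≤ k) (q : ℝ) (hq : q ∈ Set.Ioc (0 : ℝ) 1) :
    (∫ t in (0 : ℝ)..1, lamq k q t) = 1 / (q * k) := by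
  have hunit : Set.uIcc (0 : ℝ) 1 = Set.Icc 0 1 := Set.uIcc_of_le zero_le_one
  have hderiv : ∀ x ∈ Set.uIcc (0 : ℝ) 1,
      HasDerivAt (fun t => -dqCore k t / (k * Dq k q t)) (lamq k q x) x := fun x hx =>
    hasDerivAt_neg_dqCore_div_Dq hk hq (hunit ▸ hx).2
  have hint : IntervalIntegrable (lamq k q) MeasureTheory.volume 0 1 :=
    (hunit ▸ continuousOn_lamq hk hq).intervalIntegrable
  rw [intervalIntegral.integral_eq_sub_of_hasDerivAt hderiv hint, dqCore_one hk, dqCore_zero,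
    Dq_zero]
  ring
end
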